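/- For integers N ≥ 2 and 2 ≤ k ≤ N, h_{2N+1, 2k-1} = h_{2N-1, 2k-1} - h_{2N-1, 2k-3}, where by convention h_{M,1} is defined as usual and h_{M,j} = 0 if j > M. -/
import Mathlib


def h (N k : ℕ) : ℤ :=
  ∑ s ∈ (Finset.Icc 1 N).powersetCard k, (-1 : ℤ) ^ (∑ i ∈ s, i)

lemma h_rec (N k : ℕ) : h (N + 1) (k + 1) = h N (k + 1) + (-1 : ℤ) ^ (N + 1) * h N k := by
  have hnot : (N + 1) ∉ Finset.Icc 1 N := by simp
  have hins : Finset.Icc 1 (N + 1) = insert (N + 1) (Finset.Icc 1 N) := by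
    ext x; simp [Finset.mem_Icc]; omega
  unfold h
  rw [hins, Finset.powersetCard_succ_insert hnot, Finset.sum_union, Finset.sum_image]
  · congr 1
    rw [Finset.mul_sum]
    apply Finset.sum_congr rfl
    intro s hs
    have hns : (N + 1) ∉ s := by
      intro hmem
      exact hnot ((Finset.mem_powersetCard.mp hs).1 hmem)
    rw [Finset.sum_insert hns, pow_add]
  · intro s hs t ht hst
    have hns : (N + 1) ∉ s := fun hm => hnot ((Finset.mem_powersetCard.mp hs).1 hm)
    have hnt : (N + 1) ∉ t := fun hm => hnot ((Finset.mem_powersetCard.mp ht).1 hm)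
    have := congrArg (Finset.erase · (N + 1)) hst
    simpa [Finset.erase_insert hns, Finset.erase_insert hnt] using this
  · rw [Finset.disjoint_right]
    intro s hs hs'
    simp only [Finset.mem_image] at hs
    obtain ⟨t, _, rfl⟩ := hs
    exact (fun hm => hnot ((Finset.mem_powersetCard.mp hs').1 hm)) (Finset.mem_insert_self _ _)

theorem stmt6 (N k : ℕ) (hN : 2 ≤ N) (hk : 2 ≤ k) (hkN : k ≤ N) :
    h (2 * N + 1) (2 * k - 1) = h (2 * N - 1) (2 * k - 1) - h (2 * N - 1) (2 * k - 3) := by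
  obtain ⟨n, rfl⟩ : ∃ n, N = n + 1 := ⟨N - 1, by omega⟩
  obtain ⟨j, rfl⟩ : ∃ j, k = j + 2 := ⟨k - 2, by omega⟩
  have e1 : 2 * (n + 1) + 1 = (2 * n + 2) + 1 := by ring
  have e2 : 2 * (n + 1) - 1 = 2 * n + 1 := by omega
  have e3 : 2 * (j + 2) - 1 = (2 * j + 2) + 1 := by omega
  have e4 : 2 * (j + 2) - 3 = 2 * j + 1 := by omega
  rw [e1, e2, e3, e4]
  have r1 := h_rec (2 * n + 2) (2 * j + 2)
  have r2 := h_rec (2 * n + 1) (2 * j + 2)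
  have r3 := h_rec (2 * n + 1) (2 * j + 1)
  have s1 : ((-1 : ℤ)) ^ (2 * n + 2 + 1) = -1 := by
    rw [show 2 * n + 2 + 1 = 2 * (n + 1) + 1 by ring, pow_succ, pow_mul]; simp
  have s2 : ((-1 : ℤ)) ^ (2 * n + 1 + 1) = 1 := by
    rw [show 2 * n + 1 + 1 = 2 * (n + 1) by ring, pow_mul]; simp
  rw [s1] at r1
  rw [s2] at r2 r3
  have e5 : 2 * n + 1 + 1 = 2 * n + 2 := by ring
  have e6 : 2 * j + 1 + 1 = 2 * j + 2 := by ring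
  rw [e5, e6] at r2 r3
  rw [r1, r2, r3]
  ring
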